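/- arXiv:2305.18697 — 2 statements merged into one kernel-verified Lean document; each statement's English description precedes it below -/
import Mathlib

section
/- In a group, if S_{rs} S_{rj} S_{sj} = S_{rj} S_{sj} S_{rs} holds, then the relation [S_{ij}, S_{sj} S_{rs} S_{sj}^{-1}] = 1 is equivalent to the relation [S_{rs}, S_{rj} S_{ij} S_{rj}^{-1}] = 1. -/
/-!
The hypothesis says that `S_rs` commutes with `S_rj * S_sj`, so conjugating `S_rs` by `S_sj`
is the same as conjugating it by `S_rj⁻¹`. After this substitution the two commutation relations
are conjugate to each other by `S_rj`.
-/

theorem conj_eq_conj_inv_of_commute_mul {G : Type*} [Group G] {a b c : G}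
    (h : Commute a (b * c)) : c * a * c⁻¹ = b⁻¹ * a * b :=
  calc c * a * c⁻¹ = b⁻¹ * ((b * c) * a * (b * c)⁻¹) * b := by group
    _ = b⁻¹ * a * b := by rw [← h.eq, mul_inv_cancel_right]

theorem commute_conj_inv_iff_commute_conj {G : Type*} [Group G] {g x y : G} :
    Commute x (g⁻¹ * y * g) ↔ Commute y (g * x * g⁻¹) := by
  rw [← Commute.conj_iff g, Commute.symm_iff]
  simp only [mul_assoc, mul_inv_cancel_left, mul_inv_cancel, mul_one]

/-- In a group, if `S_rs * S_rj * S_sj = S_rj * S_sj * S_rs`, then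
`[S_ij, S_sj * S_rs * S_sj⁻¹] = 1` iff `[S_rs, S_rj * S_ij * S_rj⁻¹] = 1`. -/
theorem stmt0 {G : Type*} [Group G] (Sij Srs Srj Ssj : G)
    (h : Srs * Srj * Ssj = Srj * Ssj * Srs) :
    Sij * (Ssj * Srs * Ssj⁻¹) * Sij⁻¹ * (Ssj * Srs * Ssj⁻¹)⁻¹ = 1 ↔
      Srs * (Srj * Sij * Srj⁻¹) * Srs⁻¹ * (Srj * Sij * Srj⁻¹)⁻¹ = 1 := by
  have hconj : Ssj * Srs * Ssj⁻¹ = Srj⁻¹ * Srs * Srj :=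
    conj_eq_conj_inv_of_commute_mul ((mul_assoc _ _ _).symm.trans h)
  rw [hconj, ← commutatorElement_def, ← commutatorElement_def,
    commutatorElement_eq_one_iff_commute, commutatorElement_eq_one_iff_commute]
  exact commute_conj_inv_iff_commute_conj
end

section
/- For a generic arrangement A^0 = {H_1^0,...,H_n^0} of n hyperplanes in C^k (n > k), and any (k+1)-element subset L of {1,...,n}, the set D_L of translation parameters (t_1,...,t_n) ∈ C^n such that the translated hyperplanes {H_p^0 + α_p t_p : p ∈ L} have nonempty common intersection is an affine hyperplane in C^n. -/
/-!
Fix `K ⊆ L` with `|K| = k`. Uniqueness of the solution of the `K`-system makes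
`x ↦ (∑ i, α p i * x i)_{p ∈ L}` an injective linear map `ℂ^k → ℂ^L`, so its range is a
hyperplane `ker g` of `ℂ^L`. The translated hyperplanes indexed by `L` meet exactly when
`(c + t)|_L` lies in that range, i.e. when `g (t|_L) = -g (c|_L)`; and `t ↦ g (t|_L)` is nonzero
because restriction to `L` is surjective.
-/

open Module

namespace Submodule

variable {K V : Type*} [Field K] [AddCommGroup V] [Module K V] [FiniteDimensional K V]

theorem exists_dual_ne_zero_eq_ker_of_finrank_add_one {p : Submodule K V}
    (hp : finrank K p + 1 = finrank K V) : ∃ f : Dual K V, f ≠ 0 ∧ p = LinearMap.ker f := by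
  have hlt : p < ⊤ := by
    rw [lt_top_iff_ne_top]
    rintro rfl
    rw [finrank_top] at hp
    omega
  obtain ⟨f, hf, hpf⟩ := exists_dual_map_eq_bot_of_lt_top hlt inferInstance
  refine ⟨f, hf, eq_of_le_of_finrank_eq (LinearMap.le_ker_iff_map.mpr hpf) ?_⟩
  have := Dual.finrank_ker_add_one_of_ne_zero hf
  omega

end Submodule

namespace LinearMap

variable {K E V : Type*} [Field K] [AddCommGroup E] [Module K E] [AddCommGroup V] [Module K V]
  [FiniteDimensional K V]

theorem exists_dual_ne_zero_range_eq_ker {A : E →ₗ[K] V} (hA : Function.Injective A)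
    (hdim : finrank K E + 1 = finrank K V) :
    ∃ f : Dual K V, f ≠ 0 ∧ range A = ker f :=
  Submodule.exists_dual_ne_zero_eq_ker_of_finrank_add_one (by rwa [finrank_range_of_inj hA])

end LinearMap

namespace Matrix

variable {𝕜 ι m : Type*} [Field 𝕜] [Fintype m]

theorem funLeft_comp_mulVecLin_injective_of_existsUnique {A : Matrix ι m 𝕜} {c : ι → 𝕜}
    {K L : Finset ι} (hKL : K ⊆ L) (huniq : ∃! x, ∀ p ∈ K, (A *ᵥ x) p = c p) :
    Function.Injective (LinearMap.funLeft 𝕜 𝕜 ((↑) : L → ι) ∘ₗ A.mulVecLin) := by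
  rw [← LinearMap.ker_eq_bot, LinearMap.ker_eq_bot']
  intro x hx
  obtain ⟨y, hy, hy_uniq⟩ := huniq
  have hxK : ∀ p ∈ K, (A *ᵥ x) p = 0 := fun p hp => congrFun hx ⟨p, hKL hp⟩
  have : y + x = y := hy_uniq _ fun p hp => by simp [mulVec_add, hy p hp, hxK p hp]
  simpa using this

end Matrix

theorem stmt19_general (k n : ℕ)
    (α : Fin n → Fin k → ℂ) (c : Fin n → ℂ)
    (hgen : ∀ K : Finset (Fin n), K.card = k →
      ∃! x : Fin k → ℂ, ∀ p ∈ K, ∑ i, α p i * x i = c p)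
    (L : Finset (Fin n)) (hL : L.card = k + 1) :
    ∃ (f : (Fin n → ℂ) →ₗ[ℂ] ℂ) (d : ℂ), f ≠ 0 ∧
      {t : Fin n → ℂ |
        ∃ x : Fin k → ℂ, ∀ p ∈ L, ∑ i, α p i * x i = c p + t p} =
      {t : Fin n → ℂ | f t = d} := by
  obtain ⟨K, hKL, hK⟩ := L.exists_subset_card_eq (show k ≤ L.card by omega)
  let restrict := LinearMap.funLeft ℂ ℂ ((↑) : L → Fin n)
  have hA := Matrix.funLeft_comp_mulVecLin_injective_of_existsUnique (A := α) hKL (hgen K hK)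
  obtain ⟨g, hg, hrange⟩ := LinearMap.exists_dual_ne_zero_range_eq_ker hA (by simp [hL])
  refine ⟨g ∘ₗ restrict, -g (restrict c), fun h => hg ?_, ?_⟩
  · exact (LinearMap.cancel_right
      (LinearMap.funLeft_surjective_of_injective _ _ _ Subtype.val_injective)).mp
      (by rw [h, LinearMap.zero_comp])
  · ext t
    have hsolv : (∃ x : Fin k → ℂ, ∀ p ∈ L, ∑ i, α p i * x i = c p + t p) ↔
        restrict (c + t) ∈ LinearMap.range (restrict ∘ₗ Matrix.mulVecLin α) := by
      simp only [LinearMap.mem_range, funext_iff, Subtype.forall]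
      rfl -- `(α *ᵥ x) p` unfolds to `∑ i, α p i * x i`
    rw [Set.mem_ofPred_eq, Set.mem_ofPred_eq, hsolv, hrange, LinearMap.mem_ker, map_add, map_add,
      LinearMap.comp_apply, eq_neg_iff_add_eq_zero, add_comm]

/-- For a generic arrangement of `n` hyperplanes
`H_p⁰ = {x ∈ ℂ^k | ∑ i, α p i * x i = c p}` with unit normals `α p`
(every `k` of them meet in a single point), and any `(k+1)`-subset `L` of the
index set, the set `D_L` of translation parameters `t ∈ ℂ^n` such that the
translated hyperplanes `{x | ∑ i, α p i * x i = c p + t p}`, `p ∈ L`, have a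
common point is an affine hyperplane in `ℂ^n`. -/
theorem stmt19 (k n : ℕ) (hkn : k < n)
    (α : Fin n → Fin k → ℂ) (c : Fin n → ℂ)
    (hunit : ∀ p, ∑ i, α p i * α p i = 1)
    (hgen : ∀ K : Finset (Fin n), K.card = k →
      ∃! x : Fin k → ℂ, ∀ p ∈ K, ∑ i, α p i * x i = c p)
    (L : Finset (Fin n)) (hL : L.card = k + 1) :
    ∃ (f : (Fin n → ℂ) →ₗ[ℂ] ℂ) (d : ℂ), f ≠ 0 ∧
      {t : Fin n → ℂ |
        ∃ x : Fin k → ℂ, ∀ p ∈ L, ∑ i, α p i * x i = c p + t p} =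
      {t : Fin n → ℂ | f t = d} :=
  stmt19_general k n α c hgen L hL
end
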